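/- arXiv:2112.14962 — 2 statements merged into one kernel-verified Lean document; each statement's English description precedes it below -/
import Mathlib

section
/- If a sequent Γ admits a derivation in MELL extended with the cut rule containing exactly k instances of cut, with active formula pairs (A1,Ā1), …, (Ak,Āk), then there exist natural numbers n1, …, nk such that the sequent Γ, ?^{n1}(A1⊗Ā1), …, ?^{nk}(Ak⊗Āk) is provable in MELL (without cut). -/
/-! # Formulas of multiplicative exponential linear logic with the placeholder `∘` -/

inductive Formula where
  | atom  : ℕ → Formula
  | natom : ℕ → Formula
  | parr  : Formula → Formula → Formula
  | tens  : Formula → Formula → Formula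
  | bang  : Formula → Formula
  | quest : Formula → Formula
  | bot   : Formula
  | one   : Formula
  | hole  : Formula
  deriving DecidableEq

namespace Formula

/-- A MELL-formula: a formula with no occurrence of the placeholder `∘`. -/
def isMELL : Formula → Prop
  | atom _   => True
  | natom _  => True
  | parr A B => isMELL A ∧ isMELL B
  | tens A B => isMELL A ∧ isMELL B
  | bang A   => isMELL A
  | quest A  => isMELL A
  | bot      => True
  | one      => True
  | hole     => False

/-- A formula without modalities (no `!` and no `?`). -/
def noMod : Formula → Prop
  | atom _   => True
  | natom _  => True
  | parr A B => noMod A ∧ noMod B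
  | tens A B => noMod A ∧ noMod B
  | bang _   => False
  | quest _  => False
  | bot      => True
  | one      => True
  | hole     => True

/-- A formula of multiplicative linear logic with units:
built from atoms, dual atoms, `⊗`, `⅋`, `1`, `⊥`; no `∘`, `!`, `?`. -/
def isMLLu : Formula → Prop
  | atom _   => True
  | natom _  => True
  | parr A B => isMLLu A ∧ isMLLu B
  | tens A B => isMLLu A ∧ isMLLu B
  | bang _   => False
  | quest _  => False
  | bot      => True
  | one      => True
  | hole     => False

/-- Linear negation, defined through the De Morgan laws. -/
def dual : Formula → Formula
  | atom a   => natom a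
  | natom a  => atom a
  | parr A B => tens (dual A) (dual B)
  | tens A B => parr (dual A) (dual B)
  | bang A   => quest (dual A)
  | quest A  => bang (dual A)
  | bot      => one
  | one      => bot
  | hole     => hole

/-- `questN n F` is `?ⁿ F`. -/
def questN : ℕ → Formula → Formula
  | 0,     A => A
  | n + 1, A => quest (questN n A)

/-- A weaken-contradiction: a formula `?ⁿ(A ⊗ Ā)` with `A` a MELL-formula. -/
def isWeakenContradiction (C : Formula) : Prop :=
  ∃ (n : ℕ) (A : Formula), A.isMELL ∧ C = questN n (tens A (dual A))

end Formula

/-- A sequent is a (non-empty) multiset of formulas. -/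
abbrev Sequent := Multiset Formula

/-! ## Sequent systems -/

/-- The system MLL = {ax, ⊗, ⅋} (it coincides with the linear system MLLˡ). -/
inductive ProvMLL : Sequent → Prop
  | ax (a : ℕ) : ProvMLL {Formula.atom a, Formula.natom a}
  | parr (Γ : Sequent) (A B : Formula) :
      ProvMLL (A ::ₘ B ::ₘ Γ) → ProvMLL (Formula.parr A B ::ₘ Γ)
  | tens (Γ Δ : Sequent) (A B : Formula) :
      ProvMLL (A ::ₘ Γ) → ProvMLL (B ::ₘ Δ) →
      ProvMLL (Formula.tens A B ::ₘ (Γ + Δ))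

/-- The system MLLu = {ax, ⊗, ⅋, ⊥, 1}. -/
inductive ProvMLLu : Sequent → Prop
  | ax (a : ℕ) : ProvMLLu {Formula.atom a, Formula.natom a}
  | parr (Γ : Sequent) (A B : Formula) :
      ProvMLLu (A ::ₘ B ::ₘ Γ) → ProvMLLu (Formula.parr A B ::ₘ Γ)
  | tens (Γ Δ : Sequent) (A B : Formula) :
      ProvMLLu (A ::ₘ Γ) → ProvMLLu (B ::ₘ Δ) →
      ProvMLLu (Formula.tens A B ::ₘ (Γ + Δ))
  | bot (Γ : Sequent) : ProvMLLu Γ → ProvMLLu (Formula.bot ::ₘ Γ)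
  | one : ProvMLLu {Formula.one}

/-- The system MELL = {ax, ⊗, ⅋, ⊥, 1, !p, der, w?, c?}. -/
inductive ProvMELL : Sequent → Prop
  | ax (a : ℕ) : ProvMELL {Formula.atom a, Formula.natom a}
  | parr (Γ : Sequent) (A B : Formula) :
      ProvMELL (A ::ₘ B ::ₘ Γ) → ProvMELL (Formula.parr A B ::ₘ Γ)
  | tens (Γ Δ : Sequent) (A B : Formula) :
      ProvMELL (A ::ₘ Γ) → ProvMELL (B ::ₘ Δ) →
      ProvMELL (Formula.tens A B ::ₘ (Γ + Δ))
  | bot (Γ : Sequent) : ProvMELL Γ → ProvMELL (Formula.bot ::ₘ Γ)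
  | one : ProvMELL {Formula.one}
  | prom (Γ : Sequent) (A : Formula) :
      ProvMELL (A ::ₘ Γ.map Formula.quest) →
      ProvMELL (Formula.bang A ::ₘ Γ.map Formula.quest)
  | der (Γ : Sequent) (A : Formula) :
      ProvMELL (A ::ₘ Γ) → ProvMELL (Formula.quest A ::ₘ Γ)
  | weak (Γ : Sequent) (A : Formula) :
      ProvMELL Γ → ProvMELL (Formula.quest A ::ₘ Γ)
  | contr (Γ : Sequent) (A : Formula) :
      ProvMELL (Formula.quest A ::ₘ Formula.quest A ::ₘ Γ) →
      ProvMELL (Formula.quest A ::ₘ Γ)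

/-- The system MLLu^j = {ax_j, 1_j, ⊥^j, ⅋, ⊗}. -/
inductive ProvMLLuj : Sequent → Prop
  | axj (a n : ℕ) :
      ProvMLLuj (Formula.atom a ::ₘ Formula.natom a ::ₘ Multiset.replicate n Formula.hole)
  | onej (n : ℕ) : ProvMLLuj (Formula.one ::ₘ Multiset.replicate n Formula.hole)
  | botj (Γ : Sequent) :
      ProvMLLuj (Formula.hole ::ₘ Γ) → ProvMLLuj (Formula.bot ::ₘ Γ)
  | parr (Γ : Sequent) (A B : Formula) :
      ProvMLLuj (A ::ₘ B ::ₘ Γ) → ProvMLLuj (Formula.parr A B ::ₘ Γ)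
  | tens (Γ Δ : Sequent) (A B : Formula) :
      ProvMLLuj (A ::ₘ Γ) → ProvMLLuj (B ::ₘ Δ) →
      ProvMLLuj (Formula.tens A B ::ₘ (Γ + Δ))

/-- The system MELL^j = {ax_j, 1_j, ⊥^j, w^j, ⅋, ⊗, w!p, der, dig?, dig∘, c?}. -/
inductive ProvMELLj : Sequent → Prop
  | axj (a n : ℕ) :
      ProvMELLj (Formula.atom a ::ₘ Formula.natom a ::ₘ Multiset.replicate n Formula.hole)
  | onej (n : ℕ) : ProvMELLj (Formula.one ::ₘ Multiset.replicate n Formula.hole)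
  | botj (Γ : Sequent) :
      ProvMELLj (Formula.hole ::ₘ Γ) → ProvMELLj (Formula.bot ::ₘ Γ)
  | wj (Γ : Sequent) (A : Formula) :
      ProvMELLj (Formula.hole ::ₘ Γ) → ProvMELLj (Formula.quest A ::ₘ Γ)
  | parr (Γ : Sequent) (A B : Formula) :
      ProvMELLj (A ::ₘ B ::ₘ Γ) → ProvMELLj (Formula.parr A B ::ₘ Γ)
  | tens (Γ Δ : Sequent) (A B : Formula) :
      ProvMELLj (A ::ₘ Γ) → ProvMELLj (B ::ₘ Δ) →
      ProvMELLj (Formula.tens A B ::ₘ (Γ + Δ))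
  | wprom (Γ : Sequent) (A : Formula) :
      ProvMELLj (A ::ₘ Γ) → ProvMELLj (Formula.bang A ::ₘ Γ.map Formula.quest)
  | der (Γ : Sequent) (A : Formula) :
      ProvMELLj (A ::ₘ Γ) → ProvMELLj (Formula.quest A ::ₘ Γ)
  | dig (Γ : Sequent) (A : Formula) :
      ProvMELLj (Formula.quest (Formula.quest A) ::ₘ Γ) →
      ProvMELLj (Formula.quest A ::ₘ Γ)
  | digo (Γ : Sequent) :
      ProvMELLj (Formula.quest Formula.hole ::ₘ Γ) → ProvMELLj (Formula.hole ::ₘ Γ)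
  | contr (Γ : Sequent) (A : Formula) :
      ProvMELLj (Formula.quest A ::ₘ Formula.quest A ::ₘ Γ) →
      ProvMELLj (Formula.quest A ::ₘ Γ)

/-- The system MELL^j extended with the cut rule (cut formulas are MELL-formulas). -/
inductive ProvMELLjCut : Sequent → Prop
  | axj (a n : ℕ) :
      ProvMELLjCut (Formula.atom a ::ₘ Formula.natom a ::ₘ Multiset.replicate n Formula.hole)
  | onej (n : ℕ) : ProvMELLjCut (Formula.one ::ₘ Multiset.replicate n Formula.hole)
  | botj (Γ : Sequent) :
      ProvMELLjCut (Formula.hole ::ₘ Γ) → ProvMELLjCut (Formula.bot ::ₘ Γ)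
  | wj (Γ : Sequent) (A : Formula) :
      ProvMELLjCut (Formula.hole ::ₘ Γ) → ProvMELLjCut (Formula.quest A ::ₘ Γ)
  | parr (Γ : Sequent) (A B : Formula) :
      ProvMELLjCut (A ::ₘ B ::ₘ Γ) → ProvMELLjCut (Formula.parr A B ::ₘ Γ)
  | tens (Γ Δ : Sequent) (A B : Formula) :
      ProvMELLjCut (A ::ₘ Γ) → ProvMELLjCut (B ::ₘ Δ) →
      ProvMELLjCut (Formula.tens A B ::ₘ (Γ + Δ))
  | wprom (Γ : Sequent) (A : Formula) :
      ProvMELLjCut (A ::ₘ Γ) → ProvMELLjCut (Formula.bang A ::ₘ Γ.map Formula.quest)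
  | der (Γ : Sequent) (A : Formula) :
      ProvMELLjCut (A ::ₘ Γ) → ProvMELLjCut (Formula.quest A ::ₘ Γ)
  | dig (Γ : Sequent) (A : Formula) :
      ProvMELLjCut (Formula.quest (Formula.quest A) ::ₘ Γ) →
      ProvMELLjCut (Formula.quest A ::ₘ Γ)
  | digo (Γ : Sequent) :
      ProvMELLjCut (Formula.quest Formula.hole ::ₘ Γ) → ProvMELLjCut (Formula.hole ::ₘ Γ)
  | contr (Γ : Sequent) (A : Formula) :
      ProvMELLjCut (Formula.quest A ::ₘ Formula.quest A ::ₘ Γ) →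
      ProvMELLjCut (Formula.quest A ::ₘ Γ)
  | cut (Γ Δ : Sequent) (A : Formula) :
      A.isMELL → ProvMELLjCut (A ::ₘ Γ) → ProvMELLjCut (A.dual ::ₘ Δ) →
      ProvMELLjCut (Γ + Δ)

/-- The linear system MLLu^ℓ = {ax_j, 1_j, ⅋, ⊗}. -/
inductive ProvMLLuLin : Sequent → Prop
  | axj (a n : ℕ) :
      ProvMLLuLin (Formula.atom a ::ₘ Formula.natom a ::ₘ Multiset.replicate n Formula.hole)
  | onej (n : ℕ) : ProvMLLuLin (Formula.one ::ₘ Multiset.replicate n Formula.hole)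
  | parr (Γ : Sequent) (A B : Formula) :
      ProvMLLuLin (A ::ₘ B ::ₘ Γ) → ProvMLLuLin (Formula.parr A B ::ₘ Γ)
  | tens (Γ Δ : Sequent) (A B : Formula) :
      ProvMLLuLin (A ::ₘ Γ) → ProvMLLuLin (B ::ₘ Δ) →
      ProvMLLuLin (Formula.tens A B ::ₘ (Γ + Δ))

/-- The linear system MELL^ℓ = {ax_j, 1_j, ⅋, ⊗, w!p}. -/
inductive ProvMELLLin : Sequent → Prop
  | axj (a n : ℕ) :
      ProvMELLLin (Formula.atom a ::ₘ Formula.natom a ::ₘ Multiset.replicate n Formula.hole)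
  | onej (n : ℕ) : ProvMELLLin (Formula.one ::ₘ Multiset.replicate n Formula.hole)
  | parr (Γ : Sequent) (A B : Formula) :
      ProvMELLLin (A ::ₘ B ::ₘ Γ) → ProvMELLLin (Formula.parr A B ::ₘ Γ)
  | tens (Γ Δ : Sequent) (A B : Formula) :
      ProvMELLLin (A ::ₘ Γ) → ProvMELLLin (B ::ₘ Δ) →
      ProvMELLLin (Formula.tens A B ::ₘ (Γ + Δ))
  | wprom (Γ : Sequent) (A : Formula) :
      ProvMELLLin (A ::ₘ Γ) → ProvMELLLin (Formula.bang A ::ₘ Γ.map Formula.quest)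

/-- MELL with the cut rule, recording the list of active cut formulas of the derivation. -/
inductive ProvMELLCutL : Sequent → List Formula → Prop
  | ax (a : ℕ) : ProvMELLCutL {Formula.atom a, Formula.natom a} []
  | parr (Γ : Sequent) (A B : Formula) (L : List Formula) :
      ProvMELLCutL (A ::ₘ B ::ₘ Γ) L → ProvMELLCutL (Formula.parr A B ::ₘ Γ) L
  | tens (Γ Δ : Sequent) (A B : Formula) (L₁ L₂ : List Formula) :
      ProvMELLCutL (A ::ₘ Γ) L₁ → ProvMELLCutL (B ::ₘ Δ) L₂ →
      ProvMELLCutL (Formula.tens A B ::ₘ (Γ + Δ)) (L₁ ++ L₂)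
  | bot (Γ : Sequent) (L : List Formula) :
      ProvMELLCutL Γ L → ProvMELLCutL (Formula.bot ::ₘ Γ) L
  | one : ProvMELLCutL {Formula.one} []
  | prom (Γ : Sequent) (A : Formula) (L : List Formula) :
      ProvMELLCutL (A ::ₘ Γ.map Formula.quest) L →
      ProvMELLCutL (Formula.bang A ::ₘ Γ.map Formula.quest) L
  | der (Γ : Sequent) (A : Formula) (L : List Formula) :
      ProvMELLCutL (A ::ₘ Γ) L → ProvMELLCutL (Formula.quest A ::ₘ Γ) L
  | weak (Γ : Sequent) (A : Formula) (L : List Formula) :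
      ProvMELLCutL Γ L → ProvMELLCutL (Formula.quest A ::ₘ Γ) L
  | contr (Γ : Sequent) (A : Formula) (L : List Formula) :
      ProvMELLCutL (Formula.quest A ::ₘ Formula.quest A ::ₘ Γ) L →
      ProvMELLCutL (Formula.quest A ::ₘ Γ) L
  | cut (Γ Δ : Sequent) (A : Formula) (L₁ L₂ : List Formula) :
      A.isMELL → ProvMELLCutL (A ::ₘ Γ) L₁ → ProvMELLCutL (A.dual ::ₘ Δ) L₂ →
      ProvMELLCutL (Γ + Δ) (A :: (L₁ ++ L₂))

/-! ## Deep inference rewriting -/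

/-- Closure of a rewrite relation under arbitrary formula contexts. -/
inductive Deep (r : Formula → Formula → Prop) : Formula → Formula → Prop
  | base {A B : Formula} : r A B → Deep r A B
  | parrL {A A' : Formula} (B : Formula) :
      Deep r A A' → Deep r (Formula.parr A B) (Formula.parr A' B)
  | parrR (A : Formula) {B B' : Formula} :
      Deep r B B' → Deep r (Formula.parr A B) (Formula.parr A B')
  | tensL {A A' : Formula} (B : Formula) :
      Deep r A A' → Deep r (Formula.tens A B) (Formula.tens A' B)
  | tensR (A : Formula) {B B' : Formula} :
      Deep r B B' → Deep r (Formula.tens A B) (Formula.tens A B')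
  | bang {A A' : Formula} : Deep r A A' → Deep r (Formula.bang A) (Formula.bang A')
  | quest {A A' : Formula} : Deep r A A' → Deep r (Formula.quest A) (Formula.quest A')

/-- Base steps of all the deep-MELL rules:
deep dereliction, deep digging, deep ∘-digging, deep ⊥, deep weakening, deep contraction. -/
inductive DeepMELLBase : Formula → Formula → Prop
  | der (A : Formula) : DeepMELLBase A (Formula.quest A)
  | dig (A : Formula) :
      DeepMELLBase (Formula.quest (Formula.quest A)) (Formula.quest A)
  | digHole : DeepMELLBase (Formula.quest Formula.hole) Formula.hole
  | bot : DeepMELLBase Formula.hole Formula.bot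
  | weak (A : Formula) : DeepMELLBase Formula.hole (Formula.quest A)
  | contr (A : Formula) :
      DeepMELLBase (Formula.parr (Formula.quest A) (Formula.quest A)) (Formula.quest A)

/-- Base steps of deep dereliction, deep digging and deep ∘-digging. -/
inductive DigBase : Formula → Formula → Prop
  | der (A : Formula) : DigBase A (Formula.quest A)
  | dig (A : Formula) : DigBase (Formula.quest (Formula.quest A)) (Formula.quest A)
  | digHole : DigBase (Formula.quest Formula.hole) Formula.hole

/-- Base steps of deep weakening and deep ⊥. -/
inductive WeakBase : Formula → Formula → Prop
  | bot : WeakBase Formula.hole Formula.bot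
  | weak (A : Formula) : WeakBase Formula.hole (Formula.quest A)

/-- Base step of deep contraction. -/
inductive ContrBase : Formula → Formula → Prop
  | contr (A : Formula) :
      ContrBase (Formula.parr (Formula.quest A) (Formula.quest A)) (Formula.quest A)

/-- Base steps of deep ⊥, deep weakening, deep ?-contraction, deep ∘-contraction,
and the deep associativity-commutativity rules. -/
inductive WCACBase : Formula → Formula → Prop
  | bot : WCACBase Formula.hole Formula.bot
  | weak (A : Formula) : WCACBase Formula.hole (Formula.quest A)
  | contr (A : Formula) :
      WCACBase (Formula.parr (Formula.quest A) (Formula.quest A)) (Formula.quest A)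
  | contrHole :
      WCACBase (Formula.parr Formula.hole Formula.hole) Formula.hole
  | tensAssoc (A B C : Formula) :
      WCACBase (Formula.tens (Formula.tens A B) C) (Formula.tens A (Formula.tens B C))
  | parrAssoc (A B C : Formula) :
      WCACBase (Formula.parr (Formula.parr A B) C) (Formula.parr A (Formula.parr B C))
  | tensComm (A B : Formula) : WCACBase (Formula.tens A B) (Formula.tens B A)
  | parrComm (A B : Formula) : WCACBase (Formula.parr A B) (Formula.parr B A)

/-- One deep rewriting step inside a sequent: rewrite one member of the multiset. -/
def SeqStep (r : Formula → Formula → Prop) (Γ Γ' : Sequent) : Prop :=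
  ∃ (A A' : Formula) (Δ : Sequent), Deep r A A' ∧ Γ = A ::ₘ Δ ∧ Γ' = A' ::ₘ Δ

/-- Derivability between sequents by a finite sequence of deep rewriting steps. -/
def SeqDeriv (r : Formula → Formula → Prop) : Sequent → Sequent → Prop :=
  Relation.ReflTransGen (SeqStep r)

/-- Derivability between formulas by a finite sequence of deep rewriting steps. -/
def FormDeriv (r : Formula → Formula → Prop) : Formula → Formula → Prop :=
  Relation.ReflTransGen (Deep r)

/-- Equivalence of formulas modulo associativity and commutativity of ⊗ and ⅋. -/
inductive ACEq : Formula → Formula → Prop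
  | refl (A : Formula) : ACEq A A
  | symm {A B : Formula} : ACEq A B → ACEq B A
  | trans {A B C : Formula} : ACEq A B → ACEq B C → ACEq A C
  | tensAssoc (A B C : Formula) :
      ACEq (Formula.tens (Formula.tens A B) C) (Formula.tens A (Formula.tens B C))
  | parrAssoc (A B C : Formula) :
      ACEq (Formula.parr (Formula.parr A B) C) (Formula.parr A (Formula.parr B C))
  | tensComm (A B : Formula) : ACEq (Formula.tens A B) (Formula.tens B A)
  | parrComm (A B : Formula) : ACEq (Formula.parr A B) (Formula.parr B A)
  | tensCongr {A A' B B' : Formula} :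
      ACEq A A' → ACEq B B' → ACEq (Formula.tens A B) (Formula.tens A' B')
  | parrCongr {A A' B B' : Formula} :
      ACEq A A' → ACEq B B' → ACEq (Formula.parr A B) (Formula.parr A' B')
  | bangCongr {A A' : Formula} : ACEq A A' → ACEq (Formula.bang A) (Formula.bang A')
  | questCongr {A A' : Formula} : ACEq A A' → ACEq (Formula.quest A) (Formula.quest A')

/-! ## Mixed graphs and relation webs -/

/-- A mixed graph: a finite set of vertices from `ℕ`, an undirected edge relation `R`
and a directed edge relation `lt`. -/
structure MGraph where
  verts : Finset ℕ
  R : ℕ → ℕ → Prop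
  lt : ℕ → ℕ → Prop

namespace MGraph

/-- The axioms of mixed graphs: `R` symmetric and irreflexive, `lt` irreflexive,
`R ∩ lt = ∅`, and all edges between vertices. -/
def IsMixed (G : MGraph) : Prop :=
  (∀ u v, G.R u v → G.R v u) ∧
  (∀ v, ¬ G.R v v) ∧
  (∀ v, ¬ G.lt v v) ∧
  (∀ u v, ¬ (G.R u v ∧ G.lt u v)) ∧
  (∀ u v, G.R u v → u ∈ G.verts ∧ v ∈ G.verts) ∧
  (∀ u v, G.lt u v → u ∈ G.verts ∧ v ∈ G.verts)

/-- `u` and `v` are joined by no edge at all. -/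
def noEdge (G : MGraph) (u v : ℕ) : Prop :=
  ¬ G.R u v ∧ ¬ G.R v u ∧ ¬ G.lt u v ∧ ¬ G.lt v u

/-- A relation web: a non-empty mixed graph with `lt` transitive, `(V,R)` a cograph
(no induced P₄), `(V,lt)` a series-parallel order (no induced N), and no induced
3-color triangle. -/
def IsRelWeb (G : MGraph) : Prop :=
  G.IsMixed ∧ G.verts.Nonempty ∧
  (∀ u v w, G.lt u v → G.lt v w → G.lt u w) ∧
  (¬ ∃ w x y z, w ∈ G.verts ∧ x ∈ G.verts ∧ y ∈ G.verts ∧ z ∈ G.verts ∧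
      w ≠ x ∧ w ≠ y ∧ w ≠ z ∧ x ≠ y ∧ x ≠ z ∧ y ≠ z ∧
      G.R w x ∧ G.R x y ∧ G.R y z ∧ ¬ G.R w y ∧ ¬ G.R w z ∧ ¬ G.R x z) ∧
  (¬ ∃ u v y z, u ∈ G.verts ∧ v ∈ G.verts ∧ y ∈ G.verts ∧ z ∈ G.verts ∧
      u ≠ v ∧ u ≠ y ∧ u ≠ z ∧ v ≠ y ∧ v ≠ z ∧ y ≠ z ∧
      G.lt u v ∧ G.lt y v ∧ G.lt y z ∧
      ¬ G.lt u y ∧ ¬ G.lt y u ∧ ¬ G.lt u z ∧ ¬ G.lt z u ∧ ¬ G.lt v z ∧ ¬ G.lt z v) ∧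
  (¬ ∃ u w v, u ∈ G.verts ∧ w ∈ G.verts ∧ v ∈ G.verts ∧
      u ≠ w ∧ u ≠ v ∧ w ≠ v ∧
      G.noEdge u w ∧ G.R w v ∧ (G.lt u v ∨ G.lt v u))

/-- `G ⅋ H`: disjoint union. -/
def uparr (G H : MGraph) : MGraph where
  verts := G.verts ∪ H.verts
  R := fun u v => G.R u v ∨ H.R u v
  lt := fun u v => G.lt u v ∨ H.lt u v

/-- `G ⊗ H`: disjoint union plus all undirected edges between `G` and `H`. -/
def utens (G H : MGraph) : MGraph where
  verts := G.verts ∪ H.verts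
  R := fun u v => G.R u v ∨ H.R u v ∨
    (u ∈ G.verts ∧ v ∈ H.verts) ∨ (u ∈ H.verts ∧ v ∈ G.verts)
  lt := fun u v => G.lt u v ∨ H.lt u v

/-- `G ◁ H`: disjoint union plus all directed edges from `G` to `H`. -/
def useq (G H : MGraph) : MGraph where
  verts := G.verts ∪ H.verts
  R := fun u v => G.R u v ∨ H.R u v
  lt := fun u v => G.lt u v ∨ H.lt u v ∨ (u ∈ G.verts ∧ v ∈ H.verts)

/-- Graphs constructible from single vertices using `⅋`, `◁` and `⊗`
(applied to disjoint graphs). -/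
inductive Constructible : MGraph → Prop
  | single (n : ℕ) :
      Constructible ⟨{n}, fun _ _ => False, fun _ _ => False⟩
  | parr {G H : MGraph} : Constructible G → Constructible H →
      Disjoint G.verts H.verts → Constructible (uparr G H)
  | tens {G H : MGraph} : Constructible G → Constructible H →
      Disjoint G.verts H.verts → Constructible (utens G H)
  | seq {G H : MGraph} : Constructible G → Constructible H →
      Disjoint G.verts H.verts → Constructible (useq G H)

end MGraph

/-! ## Labeled graphs and the translation of formulas -/

/-- Vertex labels: atoms, dual atoms, `!`, `?`, `1`, `⊥`, `∘`. -/
inductive GLabel where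
  | atom  : ℕ → GLabel
  | natom : ℕ → GLabel
  | bang  : GLabel
  | quest : GLabel
  | one   : GLabel
  | bot   : GLabel
  | hole  : GLabel
  deriving DecidableEq

/-- Atomic labels (atoms or dual atoms). -/
def GLabel.isAtom : GLabel → Prop
  | .atom _  => True
  | .natom _ => True
  | _        => False

/-- A labeled mixed graph. -/
structure LabGraph extends MGraph where
  lab : ℕ → GLabel

namespace LabGraph

/-- A labeled graph is a relation web when its underlying mixed graph is. -/
def IsWeb (G : LabGraph) : Prop := G.toMGraph.IsRelWeb

/-- Properly labeled: a vertex has an outgoing `lt`-edge iff its label is `!` or `?`. -/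
def ProperlyLabeled (G : LabGraph) : Prop :=
  ∀ v ∈ G.verts, (∃ w, G.lt v w) ↔ (G.lab v = GLabel.bang ∨ G.lab v = GLabel.quest)

/-- Modal: properly labeled, and vertices with `lt`-edges to a common target are
`lt`-comparable. -/
def IsModalLab (G : LabGraph) : Prop :=
  G.ProperlyLabeled ∧
  ∀ u v w, u ∈ G.verts → v ∈ G.verts → w ∈ G.verts →
    G.lt u w → G.lt v w → u ≠ v → (G.lt u v ∨ G.lt v u)

/-- A (labeled) modal relation web. -/
def IsModalWeb (G : LabGraph) : Prop := G.IsWeb ∧ G.IsModalLab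

/-- The single-vertex labeled graph. -/
def point (l : GLabel) : LabGraph where
  verts := {0}
  R := fun _ _ => False
  lt := fun _ _ => False
  lab := fun _ => l

/-- `G ⅋ H` on labeled graphs, with vertices renamed evenly/oddly so as to be disjoint. -/
def gparr (G H : LabGraph) : LabGraph where
  verts := G.verts.image (fun n => 2 * n) ∪ H.verts.image (fun n => 2 * n + 1)
  R := fun u v =>
    (u % 2 = 0 ∧ v % 2 = 0 ∧ G.R (u / 2) (v / 2)) ∨
    (u % 2 = 1 ∧ v % 2 = 1 ∧ H.R (u / 2) (v / 2))
  lt := fun u v =>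
    (u % 2 = 0 ∧ v % 2 = 0 ∧ G.lt (u / 2) (v / 2)) ∨
    (u % 2 = 1 ∧ v % 2 = 1 ∧ H.lt (u / 2) (v / 2))
  lab := fun n => if n % 2 = 0 then G.lab (n / 2) else H.lab (n / 2)

/-- `G ⊗ H` on labeled graphs. -/
def gtens (G H : LabGraph) : LabGraph where
  verts := (gparr G H).verts
  R := fun u v => (gparr G H).R u v ∨
    (u % 2 = 0 ∧ v % 2 = 1 ∧ u / 2 ∈ G.verts ∧ v / 2 ∈ H.verts) ∨
    (u % 2 = 1 ∧ v % 2 = 0 ∧ u / 2 ∈ H.verts ∧ v / 2 ∈ G.verts)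
  lt := (gparr G H).lt
  lab := (gparr G H).lab

/-- `G ◁ H` on labeled graphs. -/
def gseq (G H : LabGraph) : LabGraph where
  verts := (gparr G H).verts
  R := (gparr G H).R
  lt := fun u v => (gparr G H).lt u v ∨
    (u % 2 = 0 ∧ v % 2 = 1 ∧ u / 2 ∈ G.verts ∧ v / 2 ∈ H.verts)
  lab := (gparr G H).lab

/-- The translation `⟦·⟧` of formulas into labeled graphs. -/
def trans : Formula → LabGraph
  | .atom a  => point (.atom a)
  | .natom a => point (.natom a)
  | .one     => point .one
  | .bot     => point .bot
  | .hole    => point .hole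
  | .parr A B => gparr (trans A) (trans B)
  | .tens A B => gtens (trans A) (trans B)
  | .bang A  => gseq (point .bang) (trans A)
  | .quest A => gseq (point .quest) (trans A)

/-- The translation of a sequent (represented as a non-empty list): `⅋` of the members. -/
def transSeq : List Formula → LabGraph
  | [] => point .hole
  | [A] => trans A
  | A :: B :: Γ => gparr (trans A) (transSeq (B :: Γ))

/-- Isomorphism of labeled mixed graphs. -/
def Iso (G H : LabGraph) : Prop :=
  ∃ f : ℕ → ℕ, Set.BijOn f ↑G.verts ↑H.verts ∧
    (∀ u ∈ G.verts, ∀ v ∈ G.verts,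
      (G.R u v ↔ H.R (f u) (f v)) ∧ (G.lt u v ↔ H.lt (f u) (f v))) ∧
    (∀ v ∈ G.verts, H.lab (f v) = G.lab v)

end LabGraph

/-! ## RGB-cographs -/

/-- An RGB-cograph: a labeled graph together with a linking relation. -/
structure RGB extends LabGraph where
  link : ℕ → ℕ → Prop

namespace RGB

/-- The conditions for being an RGB-cograph. -/
def IsRGB (G : RGB) : Prop :=
  G.toLabGraph.IsModalWeb ∧
  (∀ v ∈ G.verts, G.link v v) ∧
  (∀ u v, G.link u v → G.link v u) ∧
  (∀ u v w, G.link u v → G.link v w → G.link u w) ∧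
  (∀ u v, G.link u v → u ∈ G.verts ∧ v ∈ G.verts) ∧
  (∀ v ∈ G.verts, (G.lab v).isAtom →
      ∃! w, w ≠ v ∧ G.link v w ∧ (G.lab w).isAtom) ∧
  (∀ v ∈ G.verts, G.lab v = GLabel.one →
      ∀ w, G.link v w → w ≠ v → G.lab w = GLabel.hole) ∧
  (∀ v ∈ G.verts, G.lab v = GLabel.hole →
      ∃ w, G.link v w ∧ ((G.lab w).isAtom ∨ G.lab w = GLabel.one)) ∧
  (∀ v ∈ G.verts, (G.lab v = GLabel.bang ∨ G.lab v = GLabel.quest) →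
      (∃! w, G.link v w ∧ G.lab w = GLabel.bang) ∧
      (∀ w, G.link v w → G.lab w ≠ GLabel.hole))

/-- Adjacency by an `R`- or `lt`-edge (in either direction). -/
def rlAdj (G : RGB) (u v : ℕ) : Prop :=
  G.R u v ∨ G.R v u ∨ G.lt u v ∨ G.lt v u

/-- Adjacency by a linking edge. -/
def lkAdj (G : RGB) (u v : ℕ) : Prop := G.link u v ∧ u ≠ v

/-- A single step of an alternating path; `true` = linking edge, `false` = R/lt edge. -/
def aeStep (G : RGB) : Bool → ℕ → ℕ → Prop
  | true,  u, v => G.lkAdj u v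
  | false, u, v => G.rlAdj u v

/-- The edges of the list alternate, starting with an edge of kind `b`. -/
def AltChain (G : RGB) : Bool → List ℕ → Prop
  | _, [] => True
  | _, [_] => True
  | b, u :: v :: l => G.aeStep b u v ∧ AltChain G (!b) (v :: l)

/-- An æ-path: a non-empty elementary alternating path on vertices of `G`. -/
def IsAEPath (G : RGB) (l : List ℕ) : Prop :=
  l ≠ [] ∧ l.Nodup ∧ (∀ v ∈ l, v ∈ G.verts) ∧ ∃ b, G.AltChain b l

/-- A path is chordless if no `R`/`lt` edge joins two non-consecutive vertices. -/
def Chordless (G : RGB) (l : List ℕ) : Prop :=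
  ∀ (i j : ℕ) (hi : i < l.length) (hj : j < l.length), i + 2 ≤ j →
    ¬ G.rlAdj (l.get ⟨i, hi⟩) (l.get ⟨j, hj⟩)

/-- æ-connectedness: any two vertices are joined by a chordless æ-path. -/
def AEConnected (G : RGB) : Prop :=
  ∀ u ∈ G.verts, ∀ v ∈ G.verts,
    ∃ l, G.IsAEPath l ∧ G.Chordless l ∧ l.head? = some u ∧ l.getLast? = some v

/-- An æ-cycle, represented by the list of its (distinct) vertices; the closing edge
returns to the first vertex and the number of edges is even so that alternation closes. -/
def IsAECycle (G : RGB) (l : List ℕ) : Prop :=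
  2 ≤ l.length ∧ l.length % 2 = 0 ∧ l.Nodup ∧ (∀ v ∈ l, v ∈ G.verts) ∧
  ∃ b, G.AltChain b (l ++ [l.headI])

/-- Chordlessness for cycles: no `R`/`lt` edge between cyclically non-consecutive
vertices. -/
def ChordlessCyc (G : RGB) (l : List ℕ) : Prop :=
  ∀ (i j : ℕ) (hi : i < l.length) (hj : j < l.length), i + 2 ≤ j →
    ¬ (i = 0 ∧ j = l.length - 1) →
    ¬ G.rlAdj (l.get ⟨i, hi⟩) (l.get ⟨j, hj⟩)

/-- æ-acyclicity: no chordless æ-cycle. -/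
def AEAcyclic (G : RGB) : Prop :=
  ¬ ∃ l, G.IsAECycle l ∧ G.ChordlessCyc l

/-- MELL-correctness of an RGB-cograph. -/
def MELLCorrect (G : RGB) : Prop :=
  G.verts.Nonempty ∧ G.AEConnected ∧ G.AEAcyclic ∧
  (∀ w v v', G.lt w v → G.link v v' → ∃ w', G.link w' w ∧ G.lt w' v')

/-- MLL-correctness: MELL-correct and every vertex is atomic. -/
def MLLCorrect (G : RGB) : Prop :=
  G.MELLCorrect ∧ ∀ v ∈ G.verts, (G.lab v).isAtom

/-- MLLu-correctness: MELL-correct and every vertex is atomic, `1` or `∘`. -/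
def MLLuCorrect (G : RGB) : Prop :=
  G.MELLCorrect ∧
  ∀ v ∈ G.verts, (G.lab v).isAtom ∨ G.lab v = GLabel.one ∨ G.lab v = GLabel.hole

end RGB

/-! ## Fibrations -/

/-- No edge at all between `u` and `v` in the labeled graph `H`. -/
def LabGraph.noE (H : LabGraph) (u v : ℕ) : Prop := H.toMGraph.noEdge u v

/-- A linear fibration between labeled modal relation webs. -/
def IsLinearFib (G H : LabGraph) (f : ℕ → ℕ) : Prop :=
  (∀ v ∈ G.verts, f v ∈ H.verts) ∧
  -- (1) preservation of R and lt
  (∀ u v, u ∈ G.verts → v ∈ G.verts →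
    (G.R u v → H.R (f u) (f v)) ∧ (G.lt u v → H.lt (f u) (f v))) ∧
  -- (2) skew lifting
  (∀ v ∈ G.verts, ∀ w ∈ H.verts,
    (H.R w (f v) → ∃ u ∈ G.verts, G.R u v ∧ H.noE w (f u)) ∧
    (H.lt w (f v) → ∃ u ∈ G.verts, G.lt u v ∧ H.noE w (f u))) ∧
  -- (3) modality
  (∀ u v, u ∈ G.verts → v ∈ G.verts → u ≠ v → G.noE u v → H.lt (f u) (f v) →
    ∃ w ∈ G.verts, (G.lt w v ∧ f w = f u) ∨ (G.lt u w ∧ f w = f v)) ∧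
  -- (4) labels
  (∀ v ∈ G.verts,
    (G.lab v ≠ GLabel.hole → H.lab (f v) = G.lab v) ∧
    (G.lab v = GLabel.hole →
      H.lab (f v) = GLabel.hole ∨ H.lab (f v) = GLabel.bot ∨ H.lab (f v) = GLabel.quest)) ∧
  -- (5) ∘-domination
  (∀ w ∈ H.verts, (∀ v ∈ G.verts, f v ≠ w) →
    ∃ u ∈ G.verts, G.lab u = GLabel.hole ∧ H.lab (f u) = GLabel.quest ∧ H.lt (f u) w ∧
      ∀ v ∈ G.verts, (H.R (f v) (f u) ↔ H.R (f v) w) ∧ (H.lt (f v) (f u) ↔ H.lt (f v) w)) ∧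
  -- (6) ?-domination
  (∀ v₁ v₂, v₁ ∈ G.verts → v₂ ∈ G.verts → v₁ ≠ v₂ → f v₁ = f v₂ →
    ∃ w₁ w₂, w₁ ∈ G.verts ∧ w₂ ∈ G.verts ∧ w₁ ≠ w₂ ∧ f w₁ = f w₂ ∧
      H.lab (f w₁) = GLabel.quest ∧
      ((w₁ = v₁ ∧ w₂ = v₂) ∨ (G.lt w₁ v₁ ∧ G.lt w₂ v₂)))

/-- `v` and `w` are clones: every other vertex relates to them in the same way. -/
def Clones (G : LabGraph) (v w : ℕ) : Prop :=
  ∀ u ∈ G.verts, u ≠ v → u ≠ w →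
    (G.R u v ↔ G.R u w) ∧ (G.lt u v ↔ G.lt u w) ∧ (G.lt v u ↔ G.lt w u) ∧
    (G.noE u v ↔ G.noE u w)

/-- A ?-map between labeled modal relation webs. -/
def IsQMap (G H : LabGraph) (f : ℕ → ℕ) : Prop :=
  (∀ v ∈ G.verts, f v ∈ H.verts) ∧
  (∀ v w, v ∈ G.verts → w ∈ G.verts → v ≠ w → f v = f w →
    Clones G v w ∧ G.lt v w ∧ H.lab (f v) = G.lab w ∧
    (G.lab w = GLabel.quest ∨ G.lab w = GLabel.hole)) ∧
  (∀ v w, v ∈ G.verts → w ∈ G.verts → f v ≠ f w →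
    (G.R v w → H.R (f v) (f w)) ∧ (G.lt v w → H.lt (f v) (f w)) ∧
    (G.lt w v → H.lt (f w) (f v)) ∧ (G.noE v w → H.noE (f v) (f w))) ∧
  (∀ w ∈ H.verts, (∀ v ∈ G.verts, f v ≠ w) →
    H.lab w = GLabel.quest ∧ ∃ x, H.lt w x)

/-- A MELL-fibration: the composite of a ?-map followed by a linear fibration. -/
def IsMELLFib (G H : LabGraph) (f : ℕ → ℕ) : Prop :=
  ∃ (K : LabGraph) (g h : ℕ → ℕ),
    K.IsModalWeb ∧ IsQMap G K g ∧ IsLinearFib K H h ∧ ∀ v ∈ G.verts, f v = h (g v)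

/-- A MLLu-fibration: a MELL-fibration whose codomain has no `!` or `?` vertex. -/
def IsMLLuFib (G H : LabGraph) (f : ℕ → ℕ) : Prop :=
  IsMELLFib G H f ∧
  ∀ v ∈ H.verts, H.lab v ≠ GLabel.bang ∧ H.lab v ≠ GLabel.quest

/-- A MLL-fibration: a bijection whose codomain has no `!`, `?` or `∘` vertex. -/
def IsMLLFib (G H : LabGraph) (f : ℕ → ℕ) : Prop :=
  Set.BijOn f ↑G.verts ↑H.verts ∧
  ∀ v ∈ H.verts,
    H.lab v ≠ GLabel.bang ∧ H.lab v ≠ GLabel.quest ∧ H.lab v ≠ GLabel.hole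

/-- An allegiant map from an RGB-cograph to a labeled relation web. -/
def Allegiant (G : RGB) (H : LabGraph) (f : ℕ → ℕ) : Prop :=
  (∀ v w, v ∈ G.verts → w ∈ G.verts → G.link v w → v ≠ w →
    (G.lab v).isAtom → (G.lab w).isAtom →
    ∃ n : ℕ, (H.lab (f v) = GLabel.atom n ∧ H.lab (f w) = GLabel.natom n) ∨
             (H.lab (f v) = GLabel.natom n ∧ H.lab (f w) = GLabel.atom n)) ∧
  (∀ v ∈ G.verts, G.lab v ≠ GLabel.hole → H.lab (f v) = G.lab v) ∧
  (∀ v ∈ G.verts, G.lab v = GLabel.hole →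
    H.lab (f v) = GLabel.bot ∨ H.lab (f v) = GLabel.quest)

/-! ## Systems, correctness and combinatorial proofs, parametrized by X -/

inductive Sys where
  | MLL | MLLu | MELL

/-- Provability in the sequent system `X`. -/
def SysProv : Sys → Sequent → Prop
  | Sys.MLL  => ProvMLL
  | Sys.MLLu => ProvMLLu
  | Sys.MELL => ProvMELL

/-- Provability in the linear system `X^ℓ`. -/
def SysProvLin : Sys → Sequent → Prop
  | Sys.MLL  => ProvMLL
  | Sys.MLLu => ProvMLLuLin
  | Sys.MELL => ProvMELLLin

/-- The appropriate class of formulas for `X`: MELL-formulas for MELL; formulas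
without modalities for MLLu; formulas without modalities and without `∘` for MLL. -/
def SysForm : Sys → Formula → Prop
  | Sys.MLL  => fun F => F.noMod ∧ F.isMELL
  | Sys.MLLu => Formula.noMod
  | Sys.MELL => Formula.isMELL

/-- `X`-correctness of RGB-cographs. -/
def SysCorrect : Sys → RGB → Prop
  | Sys.MLL  => RGB.MLLCorrect
  | Sys.MLLu => RGB.MLLuCorrect
  | Sys.MELL => RGB.MELLCorrect

/-- `X`-fibrations. -/
def SysFib : Sys → LabGraph → LabGraph → (ℕ → ℕ) → Prop
  | Sys.MLL  => IsMLLFib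
  | Sys.MLLu => IsMLLuFib
  | Sys.MELL => IsMELLFib

/-- An `X`-combinatorial proof with conclusion graph `H`: an allegiant `X`-fibration
from an `X`-correct RGB-cograph. -/
def IsCombProof (X : Sys) (G : RGB) (f : ℕ → ℕ) (H : LabGraph) : Prop :=
  G.IsRGB ∧ SysCorrect X G ∧ Allegiant G H f ∧ SysFib X G.toLabGraph H f


/-! Each cut on `A`, `Ā` is replaced by a `⊗` rule, which leaves the formula `A ⊗ Ā` in the
conclusion instead of consuming the two premises' active formulas. Every promotion below that
rule needs its context to consist of `?`-formulas, so a dereliction is inserted there for each of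
these leftover formulas: `nᵢ` counts the promotions below the `i`-th cut. -/

def weakenContradictions (L : List Formula) (ns : List ℕ) : Sequent :=
  ↑(List.zipWith (fun A n => Formula.questN n (Formula.tens A A.dual)) L ns)

lemma weakenContradictions_cons (A : Formula) (L : List Formula) (n : ℕ) (ns : List ℕ) :
    weakenContradictions (A :: L) (n :: ns) =
      Formula.questN n (Formula.tens A A.dual) ::ₘ weakenContradictions L ns := rfl

lemma weakenContradictions_append {L₁ L₂ : List Formula} {ns₁ : List ℕ} (ns₂ : List ℕ)
    (h : ns₁.length = L₁.length) :
    weakenContradictions (L₁ ++ L₂) (ns₁ ++ ns₂) =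
      weakenContradictions L₁ ns₁ + weakenContradictions L₂ ns₂ := by
  rw [weakenContradictions, List.zipWith_append h.symm, ← Multiset.coe_add]
  rfl

lemma weakenContradictions_map_succ (L : List Formula) (ns : List ℕ) :
    weakenContradictions L (ns.map (· + 1)) = (weakenContradictions L ns).map Formula.quest := by
  induction L generalizing ns with
  | nil => rfl
  | cons A L ih =>
    cases ns with
    | nil => rfl
    | cons n ns =>
      simp only [List.map_cons, weakenContradictions_cons, ih, Multiset.map_cons]
      rfl

namespace ProvMELL

lemma der_map (Δ s : Sequent) (h : ProvMELL (Δ + s)) : ProvMELL (Δ + s.map Formula.quest) := by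
  induction s using Multiset.induction generalizing Δ with
  | empty => simpa using h
  | cons A s ih =>
    have hder : ProvMELL ((Formula.quest A ::ₘ Δ) + s) := by
      rw [Multiset.cons_add]
      exact der _ A (by rwa [← Multiset.add_cons])
    simpa only [Multiset.map_cons, Multiset.add_cons, Multiset.cons_add] using ih _ hder

lemma tens_add {Γ Δ W₁ W₂ : Sequent} {A B : Formula}
    (h₁ : ProvMELL (A ::ₘ Γ + W₁)) (h₂ : ProvMELL (B ::ₘ Δ + W₂)) :
    ProvMELL (Formula.tens A B ::ₘ (Γ + Δ) + (W₁ + W₂)) := by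
  rw [Multiset.cons_add] at h₁ h₂
  have h := tens _ _ A B h₁ h₂
  rwa [add_add_add_comm, ← Multiset.cons_add] at h

lemma prom_add {Γ W : Sequent} {A : Formula}
    (h : ProvMELL (A ::ₘ Γ.map Formula.quest + W)) :
    ProvMELL (Formula.bang A ::ₘ Γ.map Formula.quest + W.map Formula.quest) := by
  have hder := der_map _ W h
  rw [Multiset.cons_add, ← Multiset.map_add] at hder ⊢
  exact prom _ A hder

end ProvMELL

theorem ProvMELLCutL.exists_provMELL_add_weakenContradictions {Γ : Sequent} {L : List Formula}
    (h : ProvMELLCutL Γ L) :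
    ∃ ns : List ℕ, ns.length = L.length ∧ ProvMELL (Γ + weakenContradictions L ns) := by
  induction h with
  | ax a => exact ⟨[], rfl, by simpa [weakenContradictions] using ProvMELL.ax a⟩
  | one => exact ⟨[], rfl, by simpa [weakenContradictions] using ProvMELL.one⟩
  | parr Γ A B L _ ih =>
    obtain ⟨ns, hl, hp⟩ := ih
    simp only [Multiset.cons_add] at hp ⊢
    exact ⟨ns, hl, .parr _ A B hp⟩
  | bot Γ L _ ih =>
    obtain ⟨ns, hl, hp⟩ := ih
    exact ⟨ns, hl, by simpa only [Multiset.cons_add] using .bot _ hp⟩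
  | der Γ A L _ ih =>
    obtain ⟨ns, hl, hp⟩ := ih
    simp only [Multiset.cons_add] at hp ⊢
    exact ⟨ns, hl, .der _ A hp⟩
  | weak Γ A L _ ih =>
    obtain ⟨ns, hl, hp⟩ := ih
    exact ⟨ns, hl, by simpa only [Multiset.cons_add] using .weak _ A hp⟩
  | contr Γ A L _ ih =>
    obtain ⟨ns, hl, hp⟩ := ih
    simp only [Multiset.cons_add] at hp ⊢
    exact ⟨ns, hl, .contr _ A hp⟩
  | prom Γ A L _ ih =>
    obtain ⟨ns, hl, hp⟩ := ih
    refine ⟨ns.map (· + 1), by simp [hl], ?_⟩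
    rw [weakenContradictions_map_succ]
    exact hp.prom_add
  | tens Γ Δ A B L₁ L₂ _ _ ih₁ ih₂ =>
    obtain ⟨ns₁, hl₁, hp₁⟩ := ih₁
    obtain ⟨ns₂, hl₂, hp₂⟩ := ih₂
    refine ⟨ns₁ ++ ns₂, by simp [hl₁, hl₂], ?_⟩
    rw [weakenContradictions_append _ hl₁]
    exact hp₁.tens_add hp₂
  | cut Γ Δ A L₁ L₂ _ _ _ ih₁ ih₂ =>
    obtain ⟨ns₁, hl₁, hp₁⟩ := ih₁
    obtain ⟨ns₂, hl₂, hp₂⟩ := ih₂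
    refine ⟨0 :: (ns₁ ++ ns₂), by simp [hl₁, hl₂], ?_⟩
    rw [weakenContradictions_cons, weakenContradictions_append _ hl₁, Multiset.add_cons,
      Formula.questN, ← Multiset.cons_add]
    exact hp₁.tens_add hp₂

theorem cut_to_wc_general (Γ : Sequent) (L : List Formula)
    (h : ProvMELLCutL Γ L) :
    ∃ ns : List ℕ, ns.length = L.length ∧
      ProvMELL (Γ + ↑(List.zipWith
        (fun A n => Formula.questN n (Formula.tens A A.dual)) L ns)) :=
  h.exists_provMELL_add_weakenContradictions

/-- if `Γ` admits a derivation in MELL+cut whose cut instances have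
exactly the active formula pairs recorded in `L = [A1, ..., Ak]`, then for some
`n1, ..., nk` the sequent `Γ, ?^n1(A1 ⊗ A1d), ..., ?^nk(Ak ⊗ Akd)` is provable in
cut-free MELL. -/
theorem cut_to_wc (Γ : Sequent) (hΓ : Γ ≠ 0) (L : List Formula)
    (h : ProvMELLCutL Γ L) :
    ∃ ns : List ℕ, ns.length = L.length ∧
      ProvMELL (Γ + ↑(List.zipWith
        (fun A n => Formula.questN n (Formula.tens A A.dual)) L ns)) :=
  cut_to_wc_general Γ L h
end

section
/- The digging rule is admissible in MELL: for every MELL-formula A and sequent Γ of MELL-formulas, if the sequent ??A, Γ is provable in MELL, then the sequent ?A, Γ is provable in MELL. -/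
/-! Digging can be pushed up a cut-free derivation: replace, in every sequent of it, the
occurrences of `??C` that descend to the conclusion by `?C`. Every rule instance stays an
instance of the same rule, except a dereliction introducing `??C`, which simply disappears since
its premise already contains `?C`; promotion survives because `?C` is still a `?`-formula. -/

namespace Formula

def DigsTo (B B' : Formula) : Prop :=
  B' = B ∨ ∃ C, B = quest (quest C) ∧ B' = quest C

theorem DigsTo.refl (B : Formula) : DigsTo B B := Or.inl rfl

theorem digsTo_quest_quest (C : Formula) : DigsTo (quest (quest C)) (quest C) :=
  Or.inr ⟨C, rfl, rfl⟩

theorem DigsTo.of_quest {B B' : Formula} (h : DigsTo (quest B) B') :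
    B' = quest B ∨ ∃ C, B = quest C ∧ B' = B := by
  rcases h with rfl | ⟨C, hC, rfl⟩
  · exact Or.inl rfl
  · cases hC
    exact Or.inr ⟨C, rfl, rfl⟩

theorem DigsTo.exists_quest {B B' : Formula} (h : DigsTo (quest B) B') : ∃ C, B' = quest C := by
  rcases h.of_quest with rfl | ⟨C, rfl, rfl⟩ <;> exact ⟨_, rfl⟩

theorem rel_digsTo_cons_of_ne {B : Formula} {Γ Γ' : Sequent} (hB : ∀ C, B ≠ quest (quest C))
    (h : Multiset.Rel DigsTo (B ::ₘ Γ) Γ') : ∃ Δ, Multiset.Rel DigsTo Γ Δ ∧ Γ' = B ::ₘ Δ := by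
  obtain ⟨B', Δ, hB', hΔ, rfl⟩ := Multiset.rel_cons_left.mp h
  rcases hB' with rfl | ⟨C, rfl, -⟩
  · exact ⟨Δ, hΔ, rfl⟩
  · exact absurd rfl (hB C)

end Formula

theorem Multiset.Rel.exists_eq_map {α β γ : Type*} {r : α → β → Prop} {f : γ → β}
    {s : Multiset α} {t : Multiset β} (h : Multiset.Rel r s t)
    (hr : ∀ a b, r a b → ∃ c, b = f c) : ∃ u : Multiset γ, t = u.map f := by
  induction h with
  | zero => exact ⟨0, rfl⟩
  | cons hab _ ih =>
    obtain ⟨c, rfl⟩ := hr _ _ hab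
    obtain ⟨u, rfl⟩ := ih
    exact ⟨c ::ₘ u, (Multiset.map_cons f c u).symm⟩

open Formula in
theorem ProvMELL.of_rel_digsTo {Γ Γ' : Sequent} (h : ProvMELL Γ)
    (hr : Multiset.Rel DigsTo Γ Γ') : ProvMELL Γ' := by
  induction h generalizing Γ' with
  | ax a =>
    obtain ⟨Δ, hΔ, rfl⟩ := rel_digsTo_cons_of_ne (by simp) hr
    obtain ⟨Δ', hΔ', rfl⟩ := rel_digsTo_cons_of_ne (by simp) hΔ
    rw [Multiset.rel_zero_left.mp hΔ']
    exact ProvMELL.ax a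
  | one =>
    obtain ⟨Δ, hΔ, rfl⟩ := rel_digsTo_cons_of_ne (by simp) hr
    rw [Multiset.rel_zero_left.mp hΔ]
    exact ProvMELL.one
  | parr Γ B C _ ih =>
    obtain ⟨Δ, hΔ, rfl⟩ := rel_digsTo_cons_of_ne (by simp) hr
    exact .parr Δ B C (ih ((hΔ.cons (.refl C)).cons (.refl B)))
  | tens Γ₁ Γ₂ B C _ _ ih₁ ih₂ =>
    obtain ⟨Δ, hΔ, rfl⟩ := rel_digsTo_cons_of_ne (by simp) hr
    obtain ⟨Δ₁, Δ₂, hΔ₁, hΔ₂, rfl⟩ := Multiset.rel_add_left.mp hΔ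
    exact .tens Δ₁ Δ₂ B C (ih₁ (hΔ₁.cons (.refl B))) (ih₂ (hΔ₂.cons (.refl C)))
  | bot Γ _ ih =>
    obtain ⟨Δ, hΔ, rfl⟩ := rel_digsTo_cons_of_ne (by simp) hr
    exact .bot Δ (ih hΔ)
  | prom Γ B _ ih =>
    obtain ⟨Δ, hΔ, rfl⟩ := rel_digsTo_cons_of_ne (by simp) hr
    obtain ⟨Θ, rfl⟩ :=
      (Multiset.rel_map_left.mp hΔ).exists_eq_map fun _ _ hb => hb.exists_quest
    exact .prom Θ B (ih (hΔ.cons (.refl B)))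
  | der Γ B _ ih =>
    obtain ⟨B', Δ, hB', hΔ, rfl⟩ := Multiset.rel_cons_left.mp hr
    rcases hB'.of_quest with rfl | ⟨C, rfl, rfl⟩
    · exact .der Δ B (ih (hΔ.cons (.refl B)))
    · exact ih (hΔ.cons (.refl _))
  | weak Γ B _ ih =>
    obtain ⟨B', Δ, hB', hΔ, rfl⟩ := Multiset.rel_cons_left.mp hr
    obtain ⟨C, rfl⟩ := hB'.exists_quest
    exact .weak Δ C (ih hΔ)
  | contr Γ B _ ih =>
    obtain ⟨B', Δ, hB', hΔ, rfl⟩ := Multiset.rel_cons_left.mp hr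
    obtain ⟨C, rfl⟩ := hB'.exists_quest
    exact .contr Δ C (ih ((hΔ.cons hB').cons hB'))

theorem dig_admissible_general (A : Formula) (Γ : Sequent)
    (h : ProvMELL (Formula.quest (Formula.quest A) ::ₘ Γ)) :
    ProvMELL (Formula.quest A ::ₘ Γ) :=
  h.of_rel_digsTo <| .cons (Formula.digsTo_quest_quest A) <|
    Multiset.rel_refl_of_refl_on fun B _ => .refl B

/-- the digging rule is admissible in MELL. -/
theorem dig_admissible (A : Formula) (hA : A.isMELL) (Γ : Sequent) (hΓ : Γ ≠ 0)
    (hΓmell : ∀ B ∈ Γ, Formula.isMELL B)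
    (h : ProvMELL (Formula.quest (Formula.quest A) ::ₘ Γ)) :
    ProvMELL (Formula.quest A ::ₘ Γ) :=
  dig_admissible_general A Γ h
end
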